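/- Practical Lyapunov stability: suppose Y : ℕ → ℝ≥0 satisfies Y(k+1) ≤ Y(k) − c·α(Y(k)) + d for all k, where c > 0, d ≥ 0, α is class-K∞, and whenever Y(k) ≥ δ̃ one has c·α(Y(k)) ≥ 2d. Then for all k, Y(k) ≤ max{Y(0), δ̃ + d}. -/
import Mathlib

theorem stmt_12 (Y : ℕ → ℝ) (c d δt : ℝ) (hc : 0 < c) (hd : 0 ≤ d) (hδt : 0 ≤ δt)
    (α : ℝ → ℝ)
    (hαcont : ContinuousOn α (Set.Ici 0))
    (hαmono : StrictMonoOn α (Set.Ici 0))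
    (hα0 : α 0 = 0)
    (hαunbdd : ∀ M : ℝ, ∃ s ≥ (0 : ℝ), M ≤ α s)
    (hYnonneg : ∀ k, 0 ≤ Y k)
    (hdec : ∀ k, Y (k + 1) ≤ Y k - c * α (Y k) + d)
    (himp : ∀ k, δt ≤ Y k → 2 * d ≤ c * α (Y k)) :
    ∀ k, Y k ≤ max (Y 0) (δt + d) := by
  have hαnn : ∀ k, 0 ≤ α (Y k) := by
    intro k
    rcases eq_or_lt_of_le (hYnonneg k) with h | h
    · rw [← h, hα0]
    · have := hαmono (Set.self_mem_Ici) (Set.mem_Ici.2 (hYnonneg k)) h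
      rw [hα0] at this; exact this.le
  intro k
  induction k with
  | zero => exact le_max_left _ _
  | succ n ih =>
    rcases lt_or_ge (Y n) δt with h | h
    · have : Y (n + 1) ≤ Y n + d := by
        have := hdec n
        nlinarith [hαnn n, hc.le]
      calc Y (n + 1) ≤ Y n + d := this
        _ ≤ δt + d := by linarith
        _ ≤ max (Y 0) (δt + d) := le_max_right _ _
    · have h2 := himp n h
      have := hdec n
      have : Y (n + 1) ≤ Y n := by linarith
      exact this.trans ih
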